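/- arXiv:1404.0002 — 2 statements merged into one kernel-verified Lean document; each statement's English description precedes it below -/
import Mathlib

section
/- The K-linear span of the operators {X^a ∘ D^a : a ∈ ℕ^n} equals the set {f(θ) : f ∈ K[t_1,…,t_n]}, i.e. the image of the K-algebra homomorphism K[t_1,…,t_n] → End_K(K[x_1,…,x_n]) sending t_i ↦ θ_i; moreover this homomorphism is injective. In other words, the 0-th graded part of A_n is an isomorphic copy of the polynomial ring K[θ_1,…,θ_n]. -/
open MvPolynomial

/-- Multiplication by the variable `x i`, as a `K`-linear endomorphism of
`K[x_1,…,x_n]`. -/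
noncomputable def Xop (K : Type) [Field K] {n : ℕ} (i : Fin n) :
    Module.End K (MvPolynomial (Fin n) K) :=
  LinearMap.mulLeft K (X i)

/-- The `i`-th partial derivative, as a `K`-linear endomorphism of `K[x_1,…,x_n]`. -/
noncomputable def Dop (K : Type) [Field K] {n : ℕ} (i : Fin n) :
    Module.End K (MvPolynomial (Fin n) K) :=
  (pderiv i).toLinearMap

/-- `X^a := X_1^{a_1} ∘ ⋯ ∘ X_n^{a_n}`. -/
noncomputable def Xpow (K : Type) [Field K] {n : ℕ} (a : Fin n → ℕ) :
    Module.End K (MvPolynomial (Fin n) K) :=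
  (List.ofFn fun i => Xop K i ^ a i).prod

/-- `D^b := D_1^{b_1} ∘ ⋯ ∘ D_n^{b_n}`. -/
noncomputable def Dpow (K : Type) [Field K] {n : ℕ} (b : Fin n → ℕ) :
    Module.End K (MvPolynomial (Fin n) K) :=
  (List.ofFn fun i => Dop K i ^ b i).prod

/-- The `n`-th Weyl algebra `A_n`, realized as the `K`-subalgebra of
`End_K(K[x_1,…,x_n])` generated by `X_1,…,X_n, D_1,…,D_n`. -/
noncomputable def WeylAlg (K : Type) [Field K] (n : ℕ) :
    Subalgebra K (Module.End K (MvPolynomial (Fin n) K)) :=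
  Algebra.adjoin K (Set.range (Xop K (n := n)) ∪ Set.range (Dop K (n := n)))

/-- The `i`-th Euler operator `θ_i := X_i ∘ D_i`. -/
noncomputable def thetaOp (K : Type) [Field K] {n : ℕ} (i : Fin n) :
    Module.End K (MvPolynomial (Fin n) K) :=
  Xop K i * Dop K i

/-- Evaluation `f ↦ f(θ_1,…,θ_n)` of a polynomial `f ∈ K[t_1,…,t_n]` at the (pairwise
commuting) Euler operators. -/
noncomputable def thetaEval (K : Type) [Field K] {n : ℕ}
    (f : MvPolynomial (Fin n) K) : Module.End K (MvPolynomial (Fin n) K) :=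
  ∑ m ∈ f.support, f.coeff m • (List.ofFn fun i => thetaOp K i ^ m i).prod

/-- The `z`-th graded part `A_n^{(z)}`: the `K`-linear span of the operators
`X^a ∘ D^b` with `b − a = z` componentwise. -/
noncomputable def gradePart (K : Type) [Field K] {n : ℕ} (z : Fin n → ℤ) :
    Submodule K (Module.End K (MvPolynomial (Fin n) K)) :=
  Submodule.span K
    {F | ∃ a b : Fin n → ℕ, (∀ i, (b i : ℤ) - (a i : ℤ) = z i) ∧ F = Xpow K a * Dpow K b}

/-- `e(z)_i := −z_i` if `z_i < 0`, and `0` otherwise. -/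
def ez {n : ℕ} (z : Fin n → ℤ) : Fin n → ℕ := fun i => (-(z i)).toNat

/-- `w(z)_i := z_i` if `z_i > 0`, and `0` otherwise. -/
def wz {n : ℕ} (z : Fin n → ℤ) : Fin n → ℕ := fun i => (z i).toNat

/-!
Every operator in sight is diagonal in the monomial basis: `θ_i` multiplies `x^s` by `s_i`, so
`f(θ)` multiplies it by `f(s)`, and `X^a D^a` multiplies it by the falling factorial
`∏ s_i (s_i - 1) ⋯ (s_i - a_i + 1)`. Hence `f ↦ f(θ)` is an algebra homomorphism, and
`X^a D^a = p_a(θ)` for the product `p_a` of descending Pochhammer polynomials `p_{a_i}(t_i)`.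
The `p_a` span `K[t]` because `t_i p_a = p_{a + e_i} + a_i p_a`, so the span of the `X^a D^a` is
the image of `f ↦ f(θ)`. If `f(θ) = 0` then `f` vanishes on `ℕ^n`, which forces `f = 0` in
characteristic zero.
-/

namespace MvPolynomial

theorem linearMap_ext_monomial {σ R M : Type*} [CommSemiring R] [AddCommMonoid M]
    [Module R M] {f g : MvPolynomial σ R →ₗ[R] M}
    (h : ∀ s c, f (monomial s c) = g (monomial s c)) : f = g :=
  linearMap_ext fun s => LinearMap.ext (h s)

variable {σ R : Type*} [Fintype σ] [CommRing R]

noncomputable def descPochhammerProd (a : σ → ℕ) : MvPolynomial σ R :=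
  ∏ i, (descPochhammer R (a i)).toMvPolynomial i

theorem eval_descPochhammerProd (a : σ → ℕ) (x : σ → R) :
    eval x (descPochhammerProd a) = ∏ i, (descPochhammer R (a i)).eval (x i) := by
  simp only [descPochhammerProd, map_prod, eval_toMvPolynomial]

theorem X_mul_descPochhammerProd [DecidableEq σ] (a : σ → ℕ) (i : σ) :
    (X i : MvPolynomial σ R) * descPochhammerProd a =
      descPochhammerProd (Function.update a i (a i + 1)) + a i • descPochhammerProd a := by
  have hrest : ∏ j ∈ Finset.univ.erase i,
      (descPochhammer R (Function.update a i (a i + 1) j)).toMvPolynomial j =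
      ∏ j ∈ Finset.univ.erase i, (descPochhammer R (a j)).toMvPolynomial j :=
    Finset.prod_congr rfl fun j hj => by rw [Function.update_of_ne (Finset.ne_of_mem_erase hj)]
  simp only [descPochhammerProd, ← Finset.mul_prod_erase _ _ (Finset.mem_univ i), hrest,
    Function.update_self, descPochhammer_succ_right, map_mul, map_sub, map_natCast,
    Polynomial.toMvPolynomial_X, nsmul_eq_mul]
  ring

theorem span_range_descPochhammerProd [DecidableEq σ] :
    Submodule.span R (Set.range (descPochhammerProd (σ := σ) (R := R))) = ⊤ := by
  set S := Submodule.span R (Set.range (descPochhammerProd (σ := σ) (R := R)))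
  have one_mem : (1 : MvPolynomial σ R) ∈ S := by
    simpa [descPochhammerProd] using
      (Submodule.subset_span ⟨fun _ => 0, rfl⟩ :
        descPochhammerProd (R := R) (fun _ : σ => 0) ∈ S)
  have mul_X_mem (i : σ) {p} (hp : p ∈ S) : p * X i ∈ S := by
    induction hp using Submodule.span_induction with
    | mem _ h =>
      obtain ⟨a, rfl⟩ := h
      rw [mul_comm, X_mul_descPochhammerProd]
      exact S.add_mem (Submodule.subset_span ⟨_, rfl⟩)
        (S.nsmul_mem (Submodule.subset_span ⟨_, rfl⟩) _)
    | zero => simp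
    | add p q _ _ hp hq => rw [add_mul]; exact S.add_mem hp hq
    | smul r p _ hp => rw [smul_mul_assoc]; exact S.smul_mem r hp
  refine Submodule.eq_top_iff'.2 fun p => ?_
  induction p using MvPolynomial.induction_on with
  | C r => simpa [smul_eq_C_mul] using S.smul_mem r one_mem
  | add p q hp hq => exact S.add_mem hp hq
  | mul_X p i hp => exact mul_X_mem i hp

end MvPolynomial

theorem Module.End.list_prod_map_apply_of_forall_eq_smul {ι R M : Type*} [CommSemiring R]
    [AddCommMonoid M] [Module R M] (l : List ι) (f : ι → Module.End R M) (μ : ι → R) {v : M}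
    (h : ∀ i ∈ l, f i v = μ i • v) : (l.map f).prod v = (l.map μ).prod • v := by
  induction l with
  | nil => simp
  | cons j l ih =>
    simp only [List.map_cons, List.prod_cons, Module.End.mul_apply,
      ih fun i hi => h i (List.mem_cons_of_mem j hi), map_smul, h j List.mem_cons_self, smul_smul,
      mul_comm]

section EulerOperators

variable {K : Type} [Field K] {n : ℕ}

theorem thetaOp_monomial (i : Fin n) (s : Fin n →₀ ℕ) (c : K) :
    thetaOp K i (monomial s c) = s i • monomial s c :=
  X_mul_pderiv_monomial

theorem thetaOp_pow_monomial (i : Fin n) (k : ℕ) (s : Fin n →₀ ℕ) (c : K) :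
    (thetaOp K i ^ k) (monomial s c) = ((s i : K) ^ k) • monomial s c := by
  induction k with
  | zero => simp
  | succ k ih =>
    rw [pow_succ', Module.End.mul_apply, ih, map_smul, thetaOp_monomial,
      ← Nat.cast_smul_eq_nsmul K, smul_smul, pow_succ]

theorem list_prod_thetaOp_pow_monomial (m : Fin n → ℕ) (s : Fin n →₀ ℕ) (c : K) :
    (List.ofFn fun i => thetaOp K i ^ m i).prod (monomial s c) =
      (∏ i, (s i : K) ^ m i) • monomial s c := by
  rw [List.ofFn_eq_map, Module.End.list_prod_map_apply_of_forall_eq_smul _ _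
    (fun i => (s i : K) ^ m i), ← List.ofFn_eq_map, List.prod_ofFn]
  exact fun i _ => thetaOp_pow_monomial i (m i) s c

theorem thetaEval_monomial (f : MvPolynomial (Fin n) K) (s : Fin n →₀ ℕ) (c : K) :
    thetaEval K f (monomial s c) = eval (fun i => (s i : K)) f • monomial s c := by
  simp only [thetaEval, LinearMap.sum_apply, LinearMap.smul_apply,
    list_prod_thetaOp_pow_monomial, smul_smul, eval_eq', Finset.sum_smul]

theorem Dop_pow_monomial (i : Fin n) (k : ℕ) (s : Fin n →₀ ℕ) (c : K) :
    (Dop K i ^ k) (monomial s c) =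
      monomial (s - Finsupp.single i k) ((s i).descFactorial k * c) := by
  induction k with
  | zero => simp
  | succ k ih =>
    rw [pow_succ', Module.End.mul_apply, ih]
    change pderiv i _ = _
    rw [pderiv_monomial, tsub_tsub, ← Finsupp.single_add, Finsupp.tsub_apply,
      Finsupp.single_eq_same, Nat.descFactorial_succ, mul_comm (s i - k), Nat.cast_mul,
      mul_right_comm]

theorem list_prod_Dop_pow_monomial (b : Fin n → ℕ) {l : List (Fin n)} (hl : l.Nodup)
    (s : Fin n →₀ ℕ) (c : K) :
    (l.map fun i => Dop K i ^ b i).prod (monomial s c) =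
      monomial (s - (l.map fun i => Finsupp.single i (b i)).sum)
        ((l.map fun i => ((s i).descFactorial (b i) : K)).prod * c) := by
  induction l with
  | nil => simp
  | cons j l ih =>
    obtain ⟨hj, hl⟩ := List.nodup_cons.1 hl
    have hsum : (l.map fun i => Finsupp.single i (b i)).sum j = 0 := by
      rw [← Finsupp.applyAddHom_apply, map_list_sum, List.map_map]
      exact List.sum_eq_zero fun x hx => by
        obtain ⟨i, hi, rfl⟩ := List.mem_map.1 hx
        exact Finsupp.single_eq_of_ne (fun h => hj (h ▸ hi))
    simp only [List.map_cons, List.prod_cons, List.sum_cons, Module.End.mul_apply, ih hl,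
      Dop_pow_monomial, Finsupp.tsub_apply, hsum, tsub_zero, tsub_tsub, add_comm, mul_assoc]

theorem Dpow_monomial (b : Fin n → ℕ) (s : Fin n →₀ ℕ) (c : K) :
    Dpow K b (monomial s c) =
      monomial (s - ∑ i, Finsupp.single i (b i))
        ((∏ i, ((s i).descFactorial (b i) : K)) * c) := by
  rw [Dpow, List.ofFn_eq_map, list_prod_Dop_pow_monomial b (List.nodup_finRange n),
    ← List.ofFn_eq_map, ← List.ofFn_eq_map, List.sum_ofFn, List.prod_ofFn]

theorem Xpow_eq_mulLeft (a : Fin n → ℕ) :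
    Xpow K a = LinearMap.mulLeft K (monomial (∑ i, Finsupp.single i (a i)) 1) := by
  have hlmul : ∀ p : MvPolynomial (Fin n) K, LinearMap.mulLeft K p = Algebra.lmul K _ p :=
    fun _ => rfl
  simp only [Xpow, Xop, monomial_sum_one, ← List.prod_ofFn, hlmul, map_list_prod, List.map_ofFn,
    Function.comp_def, ← map_pow, X_pow_eq_monomial]

theorem Xpow_mul_Dpow_monomial (a : Fin n → ℕ) (s : Fin n →₀ ℕ) (c : K) :
    (Xpow K a * Dpow K a) (monomial s c) =
      (∏ i, ((s i).descFactorial (a i) : K)) • monomial s c := by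
  rw [Module.End.mul_apply, Dpow_monomial, Xpow_eq_mulLeft, LinearMap.mulLeft_apply,
    monomial_mul, one_mul, smul_monomial, smul_eq_mul]
  by_cases hle : ∀ i, a i ≤ s i
  · have hle' : ∑ i, Finsupp.single i (a i) ≤ s :=
      Finsupp.le_def.2 fun i => by rw [Finsupp.coe_univ_sum_single]; exact hle i
    rw [add_tsub_cancel_of_le hle']
  · push Not at hle
    obtain ⟨i, hi⟩ := hle
    rw [Finset.prod_eq_zero (Finset.mem_univ i) (by simp [Nat.descFactorial_eq_zero_iff_lt.2 hi]),
      zero_mul, monomial_zero, monomial_zero]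

variable (K n) in
noncomputable def thetaEvalAlgHom :
    MvPolynomial (Fin n) K →ₐ[K] Module.End K (MvPolynomial (Fin n) K) where
  toFun := thetaEval K
  map_one' := linearMap_ext_monomial fun s c => by simp [thetaEval_monomial]
  map_mul' f g := linearMap_ext_monomial fun s c => by
    simp [thetaEval_monomial, smul_smul, mul_comm]
  map_zero' := linearMap_ext_monomial fun s c => by simp [thetaEval_monomial]
  map_add' f g := linearMap_ext_monomial fun s c => by simp [thetaEval_monomial, add_smul]
  commutes' r := linearMap_ext_monomial fun s c => by simp [thetaEval_monomial]

theorem coe_thetaEvalAlgHom : ⇑(thetaEvalAlgHom K n) = thetaEval K := rfl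

theorem Xpow_mul_Dpow_eq_thetaEval (a : Fin n → ℕ) :
    Xpow K a * Dpow K a = thetaEval K (descPochhammerProd a) :=
  linearMap_ext_monomial fun s c => by
    simp only [Xpow_mul_Dpow_monomial, thetaEval_monomial, eval_descPochhammerProd,
      descPochhammer_eval_eq_descFactorial]

theorem span_Xpow_mul_Dpow_eq_range_thetaEval :
    Submodule.span K (Set.range fun a : Fin n → ℕ => Xpow K a * Dpow K a) =
      LinearMap.range (thetaEvalAlgHom K n).toLinearMap := by
  rw [LinearMap.range_eq_map, ← span_range_descPochhammerProd, Submodule.map_span,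
    ← Set.range_comp]
  simp only [Function.comp_def, AlgHom.toLinearMap_apply, coe_thetaEvalAlgHom,
    Xpow_mul_Dpow_eq_thetaEval]

theorem thetaEval_injective [CharZero K] : Function.Injective (thetaEval K (n := n)) := by
  intro f g h
  refine funext_set (fun _ => Set.range (Nat.cast : ℕ → K))
    (fun _ => Set.infinite_range_of_injective Nat.cast_injective) fun x hx => ?_
  choose s hs using fun i => hx i (Set.mem_univ i)
  have := congr_arg (coeff (Finsupp.equivFunOnFinite.symm s))
    (LinearMap.congr_fun h (monomial (Finsupp.equivFunOnFinite.symm s) 1))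
  simpa [thetaEval_monomial, hs] using this

end EulerOperators

theorem zeroth_graded_part_eq_theta_polynomials_general (K : Type) [Field K] [CharZero K]
    (n : ℕ) :
    (∀ F : Module.End K (MvPolynomial (Fin n) K),
        F ∈ Submodule.span K (Set.range fun a : Fin n → ℕ => Xpow K a * Dpow K a) ↔
          ∃ f : MvPolynomial (Fin n) K, F = thetaEval K f) ∧
    (∀ f g : MvPolynomial (Fin n) K,
        thetaEval K (f * g) = thetaEval K f * thetaEval K g) ∧
    thetaEval K (1 : MvPolynomial (Fin n) K) = 1 ∧
    Function.Injective (thetaEval K (n := n)) := by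
  refine ⟨fun F => ?_, map_mul (thetaEvalAlgHom K n), map_one (thetaEvalAlgHom K n),
    thetaEval_injective⟩
  rw [span_Xpow_mul_Dpow_eq_range_thetaEval, LinearMap.mem_range]
  exact exists_congr fun f => eq_comm

/-- The `K`-linear span of `{X^a ∘ D^a : a ∈ ℕ^n}` equals the image of
the `K`-algebra homomorphism `K[t_1,…,t_n] → End_K(K[x_1,…,x_n])`, `t_i ↦ θ_i`
(which is indeed multiplicative and unital), and this homomorphism is injective:
the `0`-th graded part of `A_n` is an isomorphic copy of `K[θ_1,…,θ_n]`. -/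
theorem zeroth_graded_part_eq_theta_polynomials (K : Type) [Field K] [CharZero K]
    (n : ℕ) (hn : 0 < n) :
    (∀ F : Module.End K (MvPolynomial (Fin n) K),
        F ∈ Submodule.span K (Set.range fun a : Fin n → ℕ => Xpow K a * Dpow K a) ↔
          ∃ f : MvPolynomial (Fin n) K, F = thetaEval K f) ∧
    (∀ f g : MvPolynomial (Fin n) K,
        thetaEval K (f * g) = thetaEval K f * thetaEval K g) ∧
    thetaEval K (1 : MvPolynomial (Fin n) K) = 1 ∧
    Function.Injective (thetaEval K (n := n)) :=
  zeroth_graded_part_eq_theta_polynomials_general K n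
end

section
/- For every z ∈ ℤ^n, the z-th graded part A_n^{(z)} equals both of the sets {f(θ) ∘ X^{e(z)} ∘ D^{w(z)} : f ∈ K[t_1,…,t_n]} and {X^{e(z)} ∘ D^{w(z)} ∘ f(θ) : f ∈ K[t_1,…,t_n]}; that is, A_n^{(z)} is a cyclic K[θ_1,…,θ_n]-bimodule generated by the single monomial X^{e(z)} ∘ D^{w(z)}. -/
open MvPolynomial

/-!
Conjugation by `X_i` or `D_i` shifts `θ_i` by `∓1`, so `X^a f(θ) = f(θ - a) X^a` and
`f(θ) D^b = D^b f(θ - b)`, while `X_i^c D_i^c = θ_i (θ_i - 1) ⋯ (θ_i - c + 1)`. Writing a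
generator `X^a D^b` of `A_n^{(z)}` as `X^{e(z)} (X^c D^c) D^{w(z)}` with `c = min(a, b)` therefore
puts it in both `K[θ] X^{e(z)} D^{w(z)}` and `X^{e(z)} D^{w(z)} K[θ]`. Conversely, `A_n^{(z)}` is
stable under multiplication by each `θ_i` on either side, since
`θ_i X^a D^b = X^{a + 1_i} D^{1_i + b} + a_i X^a D^b`, and symmetrically on the right.
-/
theorem SemiconjBy.pow_left_of_add {R : Type*} [Semiring R] {a x c : R}
    (h : SemiconjBy a x (x + c)) (hc : Commute a c) (k : ℕ) :
    SemiconjBy (a ^ k) x (x + k • c) := by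
  induction k with
  | zero => simp
  | succ k ih =>
    have step : SemiconjBy a (x + k • c) (x + (k + 1) • c) := by
      rw [succ_nsmul, ← add_assoc, add_right_comm]
      exact h.add_right (hc.smul_right k)
    rw [pow_succ']
    exact step.mul_left ih

theorem SemiconjBy.list_prod_ofFn {M : Type*} [Monoid M] {n : ℕ} {F : Fin n → M} {x y : M}
    (i : Fin n) (hi : SemiconjBy (F i) x y) (hx : ∀ j ≠ i, Commute (F j) x)
    (hy : ∀ j ≠ i, Commute (F j) y) : SemiconjBy (List.ofFn F).prod x y := by
  induction n with
  | zero => exact i.elim0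
  | succ n ih =>
    rw [List.ofFn_succ, List.prod_cons]
    rcases Fin.eq_zero_or_eq_succ i with rfl | ⟨i, rfl⟩
    · refine hi.mul_left (Commute.list_prod_left _ _ fun _ hF => ?_)
      obtain ⟨j, rfl⟩ := List.mem_ofFn.mp hF
      exact hx _ (Fin.succ_ne_zero j)
    · exact SemiconjBy.mul_left (hy 0 (Fin.succ_ne_zero i).symm)
        (ih i hi (fun j hj => hx _ (Fin.succ_injective _ |>.ne hj))
          (fun j hj => hy _ (Fin.succ_injective _ |>.ne hj)))

theorem List.prod_ofFn_mul_prod_ofFn {M : Type*} [Monoid M] {n : ℕ} (F G : Fin n → M)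
    (h : ∀ i j, i ≠ j → Commute (G i) (F j)) :
    (List.ofFn F).prod * (List.ofFn G).prod = (List.ofFn fun i => F i * G i).prod := by
  induction n with
  | zero => simp
  | succ n ih =>
    simp only [List.ofFn_succ, List.prod_cons]
    have hG : Commute (G 0) (List.ofFn fun i : Fin n => F i.succ).prod :=
      Commute.list_prod_right _ _ fun _ hF => by
        obtain ⟨j, rfl⟩ := List.mem_ofFn.mp hF
        exact h _ _ (Fin.succ_ne_zero j).symm
    rw [← ih _ _ fun i j hij => h _ _ (Fin.succ_injective _ |>.ne hij), mul_assoc,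
      ← mul_assoc _ (G 0), ← hG.eq]
    noncomm_ring

theorem List.prod_ofFn_eq_single {M : Type*} [Monoid M] {n : ℕ} (F : Fin n → M) (i : Fin n)
    (h : ∀ j ≠ i, F j = 1) : (List.ofFn F).prod = F i := by
  induction n with
  | zero => exact i.elim0
  | succ n ih =>
    rw [List.ofFn_succ, List.prod_cons]
    rcases Fin.eq_zero_or_eq_succ i with rfl | ⟨i, rfl⟩
    · rw [List.prod_eq_one fun _ hF => ?_, mul_one]
      obtain ⟨j, rfl⟩ := List.mem_ofFn.mp hF
      exact h _ (Fin.succ_ne_zero j)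
    · rw [h 0 (Fin.succ_ne_zero i).symm, one_mul,
        ih _ i fun j hj => h _ (Fin.succ_injective _ |>.ne hj)]

theorem MvPolynomial.semiconjBy_of_semiconjBy_X {R A σ : Type*} [CommSemiring R] [Semiring A]
    [Algebra R A] (φ ψ : MvPolynomial σ R →ₐ[R] A) {a : A}
    (h : ∀ i, SemiconjBy a (φ (X i)) (ψ (X i))) (p : MvPolynomial σ R) :
    SemiconjBy a (φ p) (ψ p) := by
  induction p using MvPolynomial.induction_on with
  | C c =>
    rw [← algebraMap_eq, AlgHom.commutes, AlgHom.commutes]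
    exact Algebra.commute_algebraMap_right c a
  | add p q hp hq => simpa only [map_add] using hp.add_right hq
  | mul_X p i hp => simpa only [map_mul] using hp.mul_right (h i)

section Weyl

variable (K : Type) [Field K] {n : ℕ}

theorem Xop_commute (i j : Fin n) : Commute (Xop K i) (Xop K j) :=
  LinearMap.ext fun p => by
    simp only [Xop, Module.End.mul_apply, LinearMap.mulLeft_apply]
    ring

theorem Dop_commute (i j : Fin n) : Commute (Dop K i) (Dop K j) := by
  refine LinearMap.ext fun p => ?_
  simp only [Dop, Module.End.mul_apply, Derivation.coeFn_coe]
  induction p using MvPolynomial.induction_on with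
  | C c => simp
  | add p q hp hq => simp only [map_add, hp, hq]
  | mul_X p k hp =>
    simp only [pderiv_mul, map_add, pderiv_X, hp, Pi.single_apply]
    split_ifs <;> simp only [Derivation.map_one_eq_zero, map_zero] <;> ring

theorem Dop_commute_Xop {i j : Fin n} (h : i ≠ j) : Commute (Dop K i) (Xop K j) :=
  LinearMap.ext fun p => by
    simp only [Dop, Xop, Module.End.mul_apply, LinearMap.mulLeft_apply, Derivation.coeFn_coe]
    rw [pderiv_mul, pderiv_X_of_ne h.symm]
    ring

theorem Dop_mul_Xop_self (i : Fin n) : Dop K i * Xop K i = thetaOp K i + 1 :=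
  LinearMap.ext fun p => by
    simp only [thetaOp, Dop, Xop, Module.End.mul_apply, LinearMap.mulLeft_apply,
      Derivation.coeFn_coe, LinearMap.add_apply, Module.End.one_apply]
    rw [pderiv_mul, pderiv_X_self]
    ring

theorem Xop_commute_thetaOp {i j : Fin n} (h : j ≠ i) : Commute (Xop K j) (thetaOp K i) :=
  (Xop_commute K j i).mul_right (Dop_commute_Xop K h.symm).symm

theorem Dop_commute_thetaOp {i j : Fin n} (h : j ≠ i) : Commute (Dop K j) (thetaOp K i) :=
  (Dop_commute_Xop K h).mul_right (Dop_commute K j i)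

theorem thetaOp_commute (i j : Fin n) : Commute (thetaOp K i) (thetaOp K j) := by
  obtain rfl | h := eq_or_ne i j
  · rfl
  · exact (Xop_commute_thetaOp K h).mul_left (Dop_commute_thetaOp K h)

theorem semiconjBy_Xop_pow (i : Fin n) (k : ℕ) :
    SemiconjBy (Xop K i ^ k) (thetaOp K i) (thetaOp K i - k) := by
  have h : SemiconjBy (Xop K i) (thetaOp K i) (thetaOp K i + -1) := by
    rw [SemiconjBy, ← sub_eq_add_neg, sub_mul, one_mul, thetaOp, mul_assoc, Dop_mul_Xop_self,
      thetaOp]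
    noncomm_ring
  simpa [sub_eq_add_neg] using h.pow_left_of_add (Commute.neg_one_right (Xop K i)) k

theorem semiconjBy_Dop_pow (i : Fin n) (k : ℕ) :
    SemiconjBy (Dop K i ^ k) (thetaOp K i) (thetaOp K i + k) := by
  have h : SemiconjBy (Dop K i) (thetaOp K i) (thetaOp K i + 1) := by
    rw [SemiconjBy, ← Dop_mul_Xop_self, thetaOp, mul_assoc]
  simpa using h.pow_left_of_add (Commute.one_right _) k

theorem Xpow_add (a c : Fin n → ℕ) : Xpow K (a + c) = Xpow K a * Xpow K c := by
  simp only [Xpow, Pi.add_apply, pow_add]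
  exact (List.prod_ofFn_mul_prod_ofFn _ _ fun i j _ => (Xop_commute K i j).pow_pow _ _).symm

theorem Dpow_add (b c : Fin n → ℕ) : Dpow K (b + c) = Dpow K b * Dpow K c := by
  simp only [Dpow, Pi.add_apply, pow_add]
  exact (List.prod_ofFn_mul_prod_ofFn _ _ fun i j _ => (Dop_commute K i j).pow_pow _ _).symm

theorem Xpow_single (i : Fin n) : Xpow K (Pi.single i 1) = Xop K i := by
  rw [Xpow, List.prod_ofFn_eq_single _ i fun j hj => by simp [Pi.single_eq_of_ne hj]]
  simp

theorem Dpow_single (i : Fin n) : Dpow K (Pi.single i 1) = Dop K i := by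
  rw [Dpow, List.prod_ofFn_eq_single _ i fun j hj => by simp [Pi.single_eq_of_ne hj]]
  simp

theorem Xpow_mul_Dpow (a b : Fin n → ℕ) :
    Xpow K a * Dpow K b = (List.ofFn fun i => Xop K i ^ a i * Dop K i ^ b i).prod :=
  List.prod_ofFn_mul_prod_ofFn _ _ fun _ _ h => (Dop_commute_Xop K h).pow_pow _ _

theorem semiconjBy_Xpow (a : Fin n → ℕ) (i : Fin n) :
    SemiconjBy (Xpow K a) (thetaOp K i) (thetaOp K i - a i) :=
  SemiconjBy.list_prod_ofFn i (semiconjBy_Xop_pow K i (a i))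
    (fun _ hj => (Xop_commute_thetaOp K hj).pow_left _)
    (fun _ hj => ((Xop_commute_thetaOp K hj).sub_right (Nat.cast_commute _ _).symm).pow_left _)

theorem semiconjBy_Dpow (b : Fin n → ℕ) (i : Fin n) :
    SemiconjBy (Dpow K b) (thetaOp K i) (thetaOp K i + b i) :=
  SemiconjBy.list_prod_ofFn i (semiconjBy_Dop_pow K i (b i))
    (fun _ hj => (Dop_commute_thetaOp K hj).pow_left _)
    (fun _ hj => ((Dop_commute_thetaOp K hj).add_right (Nat.cast_commute _ _).symm).pow_left _)

theorem thetaOp_mul_Xpow (a : Fin n → ℕ) (i : Fin n) :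
    thetaOp K i * Xpow K a = Xpow K a * (thetaOp K i + a i) := by
  simpa using ((semiconjBy_Xpow K a i).add_right (Nat.cast_commute (a i) _).symm).eq.symm

theorem thetaOp_mul_Dop_pow (i : Fin n) (k : ℕ) :
    thetaOp K i * Dop K i ^ k = Dop K i ^ k * (thetaOp K i - k) := by
  simpa using ((semiconjBy_Dop_pow K i k).sub_right (Nat.cast_commute k _).symm).eq.symm

theorem Xpow_mul_thetaOp_mul_Dpow (a b : Fin n → ℕ) (i : Fin n) :
    Xpow K a * thetaOp K i * Dpow K b
      = Xpow K (a + Pi.single i 1) * Dpow K (Pi.single i 1 + b) := by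
  rw [Xpow_add, Dpow_add, Xpow_single, Dpow_single, thetaOp]
  noncomm_ring

open scoped IsMulCommutative

noncomputable def eulerAlgebra (K : Type) [Field K] (n : ℕ) :
    Subalgebra K (Module.End K (MvPolynomial (Fin n) K)) :=
  Algebra.adjoin K (Set.range (thetaOp K))

instance : IsMulCommutative (eulerAlgebra K n) :=
  Algebra.isMulCommutative_adjoin K <| by
    rintro _ ⟨i, rfl⟩ _ ⟨j, rfl⟩
    exact thetaOp_commute K i j

/-- `thetaEval` as an algebra map; `aeval` needs a commutative target, hence the detour through
the commutative subalgebra `eulerAlgebra`. -/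
noncomputable def thetaEvalHom (K : Type) [Field K] (n : ℕ) :
    MvPolynomial (Fin n) K →ₐ[K] Module.End K (MvPolynomial (Fin n) K) :=
  (eulerAlgebra K n).val.comp
    (aeval fun i => (⟨thetaOp K i, Algebra.subset_adjoin ⟨i, rfl⟩⟩ : eulerAlgebra K n))

theorem coe_thetaEvalHom : ⇑(thetaEvalHom K n) = thetaEval K := by
  funext f
  rw [thetaEval, thetaEvalHom, AlgHom.comp_apply, aeval_def, eval₂_eq', map_sum]
  refine Finset.sum_congr rfl fun m _ => ?_
  rw [← Algebra.smul_def, map_smul, ← Fin.prod_ofFn, map_list_prod, List.map_ofFn]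
  simp only [Function.comp_def, map_pow]
  rfl

@[simp]
theorem thetaEvalHom_X (i : Fin n) : thetaEvalHom K n (X i) = thetaOp K i := by
  simp [thetaEvalHom]

theorem Xpow_mul_thetaEval (a : Fin n → ℕ) (g : MvPolynomial (Fin n) K) :
    Xpow K a * thetaEval K g = thetaEval K (aeval (fun i => X i - C (a i : K)) g) * Xpow K a := by
  have h := semiconjBy_of_semiconjBy_X (thetaEvalHom K n)
    ((thetaEvalHom K n).comp (aeval fun i => X i - C (a i : K))) (fun i => by
      rw [AlgHom.comp_apply, aeval_X, map_sub, map_natCast, map_natCast, thetaEvalHom_X]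
      exact semiconjBy_Xpow K a i) g
  rwa [AlgHom.comp_apply, coe_thetaEvalHom] at h

theorem thetaEval_mul_Dpow (b : Fin n → ℕ) (g : MvPolynomial (Fin n) K) :
    thetaEval K g * Dpow K b = Dpow K b * thetaEval K (aeval (fun i => X i - C (b i : K)) g) := by
  have h := semiconjBy_of_semiconjBy_X ((thetaEvalHom K n).comp (aeval fun i => X i - C (b i : K)))
    (thetaEvalHom K n) (fun i => by
      rw [AlgHom.comp_apply, aeval_X, map_sub, map_natCast, map_natCast, thetaEvalHom_X]
      simpa using (semiconjBy_Dpow K b i).sub_right (Nat.cast_commute (b i) _).symm) g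
  rw [AlgHom.comp_apply, coe_thetaEvalHom] at h
  exact h.eq.symm

theorem Xop_pow_mul_Dop_pow (i : Fin n) (c : ℕ) :
    Xop K i ^ c * Dop K i ^ c = Polynomial.aeval (thetaOp K i) (descPochhammer K c) := by
  induction c with
  | zero => simp
  | succ c ih =>
    rw [descPochhammer_succ_right, map_mul, ← ih, map_sub, Polynomial.aeval_X, map_natCast,
      pow_succ, pow_succ', mul_assoc, ← mul_assoc (Xop K i), ← thetaOp, thetaOp_mul_Dop_pow,
      ← mul_assoc]

noncomputable def mvDescPochhammer (c : Fin n → ℕ) : MvPolynomial (Fin n) K :=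
  ∏ i, Polynomial.aeval (X i) (descPochhammer K (c i))

theorem Xpow_mul_Dpow_self (c : Fin n → ℕ) :
    Xpow K c * Dpow K c = thetaEval K (mvDescPochhammer K c) := by
  rw [Xpow_mul_Dpow, mvDescPochhammer, ← coe_thetaEvalHom, ← Fin.prod_ofFn, map_list_prod,
    List.map_ofFn]
  congr 2
  funext i
  rw [Function.comp_apply, ← Polynomial.aeval_algHom_apply, thetaEvalHom_X, Xop_pow_mul_Dop_pow]

theorem Xpow_add_mul_Dpow_add (e c w : Fin n → ℕ) :
    Xpow K (e + c) * Dpow K (c + w)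
      = Xpow K e * thetaEval K (mvDescPochhammer K c) * Dpow K w := by
  rw [Xpow_add, Dpow_add, ← Xpow_mul_Dpow_self]
  noncomm_ring

theorem Xpow_mul_Dpow_mem_gradePart {z : Fin n → ℤ} {a b : Fin n → ℕ}
    (h : ∀ i, (b i : ℤ) - a i = z i) : Xpow K a * Dpow K b ∈ gradePart K z :=
  Submodule.subset_span ⟨a, b, h, rfl⟩

theorem Xpow_mul_thetaOp_mul_Dpow_mem_gradePart {z : Fin n → ℤ} {a b : Fin n → ℕ}
    (h : ∀ i, (b i : ℤ) - a i = z i) (i : Fin n) :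
    Xpow K a * thetaOp K i * Dpow K b ∈ gradePart K z := by
  rw [Xpow_mul_thetaOp_mul_Dpow]
  refine Xpow_mul_Dpow_mem_gradePart K fun j => ?_
  have := h j
  simp only [Pi.add_apply]
  omega

theorem thetaOp_mul_mem_gradePart {z : Fin n → ℤ} {F : Module.End K (MvPolynomial (Fin n) K)}
    (i : Fin n) (hF : F ∈ gradePart K z) : thetaOp K i * F ∈ gradePart K z := by
  suffices gradePart K z ≤ (gradePart K z).comap (LinearMap.mulLeft K (thetaOp K i)) from this hF
  refine Submodule.span_le.mpr ?_
  rintro _ ⟨a, b, hab, rfl⟩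
  have key : thetaOp K i * (Xpow K a * Dpow K b)
      = Xpow K a * thetaOp K i * Dpow K b + a i • (Xpow K a * Dpow K b) := by
    rw [← mul_assoc, thetaOp_mul_Xpow, mul_add, add_mul, nsmul_eq_mul, ← mul_assoc,
      (Nat.cast_commute _ _).eq]
  rw [SetLike.mem_coe, Submodule.mem_comap, LinearMap.mulLeft_apply, key]
  exact add_mem (Xpow_mul_thetaOp_mul_Dpow_mem_gradePart K hab i)
    (Submodule.smul_of_tower_mem _ _ (Xpow_mul_Dpow_mem_gradePart K hab))

theorem mul_thetaOp_mem_gradePart {z : Fin n → ℤ} {F : Module.End K (MvPolynomial (Fin n) K)}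
    (i : Fin n) (hF : F ∈ gradePart K z) : F * thetaOp K i ∈ gradePart K z := by
  suffices gradePart K z ≤ (gradePart K z).comap (LinearMap.mulRight K (thetaOp K i)) from this hF
  refine Submodule.span_le.mpr ?_
  rintro _ ⟨a, b, hab, rfl⟩
  have key : Xpow K a * Dpow K b * thetaOp K i
      = Xpow K a * thetaOp K i * Dpow K b + b i • (Xpow K a * Dpow K b) := by
    rw [mul_assoc, (semiconjBy_Dpow K b i).eq, add_mul, mul_add, nsmul_eq_mul, ← mul_assoc,
      ← mul_assoc, ← mul_assoc, (Nat.cast_commute _ _).eq]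
  rw [SetLike.mem_coe, Submodule.mem_comap, LinearMap.mulRight_apply, key]
  exact add_mem (Xpow_mul_thetaOp_mul_Dpow_mem_gradePart K hab i)
    (Submodule.smul_of_tower_mem _ _ (Xpow_mul_Dpow_mem_gradePart K hab))

theorem thetaEval_mul_mem_gradePart {z : Fin n → ℤ} {F : Module.End K (MvPolynomial (Fin n) K)}
    (f : MvPolynomial (Fin n) K) (hF : F ∈ gradePart K z) :
    thetaEval K f * F ∈ gradePart K z := by
  rw [← coe_thetaEvalHom]
  induction f using MvPolynomial.induction_on generalizing F with
  | C c =>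
    rw [← algebraMap_eq, AlgHom.commutes, ← Algebra.smul_def]
    exact Submodule.smul_mem _ c hF
  | add p q hp hq => rw [map_add, add_mul]; exact add_mem (hp hF) (hq hF)
  | mul_X p i hp =>
    rw [map_mul, thetaEvalHom_X, mul_assoc]
    exact hp (thetaOp_mul_mem_gradePart K i hF)

theorem mul_thetaEval_mem_gradePart {z : Fin n → ℤ} {F : Module.End K (MvPolynomial (Fin n) K)}
    (f : MvPolynomial (Fin n) K) (hF : F ∈ gradePart K z) :
    F * thetaEval K f ∈ gradePart K z := by
  rw [← coe_thetaEvalHom]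
  induction f using MvPolynomial.induction_on generalizing F with
  | C c =>
    rw [← algebraMap_eq, AlgHom.commutes, ← Algebra.commutes, ← Algebra.smul_def]
    exact Submodule.smul_mem _ c hF
  | add p q hp hq => rw [map_add, mul_add]; exact add_mem (hp hF) (hq hF)
  | mul_X p i hp =>
    rw [map_mul, thetaEvalHom_X, ← mul_assoc]
    exact mul_thetaOp_mem_gradePart K i (hp hF)

theorem exists_eq_ez_add_of_sub_eq {z : Fin n → ℤ} {a b : Fin n → ℕ}
    (h : ∀ i, (b i : ℤ) - a i = z i) : ∃ c, a = ez z + c ∧ b = c + wz z :=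
  ⟨fun i => min (a i) (b i), funext fun i => by have := h i; simp only [Pi.add_apply, ez]; omega,
    funext fun i => by have := h i; simp only [Pi.add_apply, wz]; omega⟩

theorem Xpow_ez_mul_Dpow_wz_mem_gradePart (z : Fin n → ℤ) :
    Xpow K (ez z) * Dpow K (wz z) ∈ gradePart K z :=
  Xpow_mul_Dpow_mem_gradePart K fun i => by simp only [ez, wz]; omega

theorem gradePart_eq_range_mulRight (z : Fin n → ℤ) :
    gradePart K z = LinearMap.range ((LinearMap.mulRight K (Xpow K (ez z) * Dpow K (wz z))).comp
      (thetaEvalHom K n).toLinearMap) := by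
  refine le_antisymm (Submodule.span_le.mpr ?_) ?_
  · rintro _ ⟨a, b, hab, rfl⟩
    obtain ⟨c, rfl, rfl⟩ := exists_eq_ez_add_of_sub_eq hab
    rw [Xpow_add_mul_Dpow_add, Xpow_mul_thetaEval, mul_assoc]
    exact ⟨_, by rw [LinearMap.comp_apply, AlgHom.toLinearMap_apply, coe_thetaEvalHom,
      LinearMap.mulRight_apply]⟩
  · rintro _ ⟨f, rfl⟩
    rw [LinearMap.comp_apply, AlgHom.toLinearMap_apply, coe_thetaEvalHom, LinearMap.mulRight_apply]
    exact thetaEval_mul_mem_gradePart K f (Xpow_ez_mul_Dpow_wz_mem_gradePart K z)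

theorem gradePart_eq_range_mulLeft (z : Fin n → ℤ) :
    gradePart K z = LinearMap.range ((LinearMap.mulLeft K (Xpow K (ez z) * Dpow K (wz z))).comp
      (thetaEvalHom K n).toLinearMap) := by
  refine le_antisymm (Submodule.span_le.mpr ?_) ?_
  · rintro _ ⟨a, b, hab, rfl⟩
    obtain ⟨c, rfl, rfl⟩ := exists_eq_ez_add_of_sub_eq hab
    rw [Xpow_add_mul_Dpow_add, mul_assoc, thetaEval_mul_Dpow, ← mul_assoc]
    exact ⟨_, by rw [LinearMap.comp_apply, AlgHom.toLinearMap_apply, coe_thetaEvalHom,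
      LinearMap.mulLeft_apply]⟩
  · rintro _ ⟨f, rfl⟩
    rw [LinearMap.comp_apply, AlgHom.toLinearMap_apply, coe_thetaEvalHom, LinearMap.mulLeft_apply]
    exact mul_thetaEval_mem_gradePart K f (Xpow_ez_mul_Dpow_wz_mem_gradePart K z)

end Weyl

theorem graded_part_cyclic_bimodule_general (K : Type) [Field K]
    (n : ℕ) (z : Fin n → ℤ) :
    (∀ F : Module.End K (MvPolynomial (Fin n) K),
        F ∈ gradePart K z ↔
          ∃ f : MvPolynomial (Fin n) K,
            F = thetaEval K f * (Xpow K (ez z) * Dpow K (wz z))) ∧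
    (∀ F : Module.End K (MvPolynomial (Fin n) K),
        F ∈ gradePart K z ↔
          ∃ f : MvPolynomial (Fin n) K,
            F = Xpow K (ez z) * Dpow K (wz z) * thetaEval K f) := by
  refine ⟨fun F => ?_, fun F => ?_⟩
  · simp only [gradePart_eq_range_mulRight, LinearMap.mem_range, LinearMap.comp_apply,
      AlgHom.toLinearMap_apply, coe_thetaEvalHom, LinearMap.mulRight_apply, eq_comm]
  · simp only [gradePart_eq_range_mulLeft, LinearMap.mem_range, LinearMap.comp_apply,
      AlgHom.toLinearMap_apply, coe_thetaEvalHom, LinearMap.mulLeft_apply, eq_comm]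

/-- For every `z ∈ ℤ^n`, the `z`-th graded part `A_n^{(z)}` equals both
`{f(θ) ∘ X^{e(z)} ∘ D^{w(z)} : f ∈ K[t_1,…,t_n]}` and
`{X^{e(z)} ∘ D^{w(z)} ∘ f(θ) : f ∈ K[t_1,…,t_n]}`; i.e. `A_n^{(z)}` is a cyclic
`K[θ]`-bimodule generated by `X^{e(z)} ∘ D^{w(z)}`. -/
theorem graded_part_cyclic_bimodule (K : Type) [Field K] [CharZero K]
    (n : ℕ) (hn : 0 < n) (z : Fin n → ℤ) :
    (∀ F : Module.End K (MvPolynomial (Fin n) K),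
        F ∈ gradePart K z ↔
          ∃ f : MvPolynomial (Fin n) K,
            F = thetaEval K f * (Xpow K (ez z) * Dpow K (wz z))) ∧
    (∀ F : Module.End K (MvPolynomial (Fin n) K),
        F ∈ gradePart K z ↔
          ∃ f : MvPolynomial (Fin n) K,
            F = Xpow K (ez z) * Dpow K (wz z) * thetaEval K f) :=
  graded_part_cyclic_bimodule_general K n z
end
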